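/- Let σ₀ determine a strictly weak, left invariant Riemannian metric on a Hilbertian H-type group M = V ⊕ W. Then for all x, y ∈ V and z₁, z₂ ∈ W one has d_σ(x + z₁, y + z₂) = 0 if and only if x = y. -/

import Mathlib

open scoped RealInnerProductSpace

/-- A Hilbertian H-type group: a real Hilbert space `M` with an orthogonal decomposition
`M = V ⊕ W` into nontrivial closed subspaces, `W` finite dimensional, a continuous
skew-symmetric Lie bracket with `[M,M] ⊆ W`, `[M,W] = 0`, and the map `J` determined by
`⟪J z x, y⟫ = ⟪z, [x,y]⟫` satisfying `J_z ∘ J_z = -‖z‖² id` on `V`. -/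
structure HTypeGroup (M : Type*) [NormedAddCommGroup M] [InnerProductSpace ℝ M]
    [CompleteSpace M] where
  V : Submodule ℝ M
  W : Submodule ℝ M
  V_closed : IsClosed (V : Set M)
  W_closed : IsClosed (W : Set M)
  V_nontrivial : V ≠ ⊥
  W_nontrivial : W ≠ ⊥
  W_findim : FiniteDimensional ℝ ↥W
  orthogonal : ∀ v ∈ V, ∀ w ∈ W, ⟪v, w⟫ = 0
  proj1 : M →L[ℝ] M
  proj2 : M →L[ℝ] M
  proj1_mem : ∀ v : M, proj1 v ∈ V
  proj2_mem : ∀ v : M, proj2 v ∈ W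
  proj_add : ∀ v : M, proj1 v + proj2 v = v
  bracket : M →L[ℝ] M →L[ℝ] M
  bracket_skew : ∀ u v : M, bracket u v = - bracket v u
  bracket_mem_W : ∀ u v : M, bracket u v ∈ W
  bracket_W : ∀ u : M, ∀ w ∈ W, bracket u w = 0
  Jmap : M →L[ℝ] M →L[ℝ] M
  Jmap_mem_V : ∀ z ∈ W, ∀ x ∈ V, Jmap z x ∈ V
  Jmap_inner : ∀ z ∈ W, ∀ x ∈ V, ∀ y ∈ V, ⟪Jmap z x, y⟫ = ⟪z, bracket x y⟫
  Jmap_sq : ∀ z ∈ W, ∀ x ∈ V, Jmap z (Jmap z x) = -(‖z‖ ^ 2) • x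

/-- A continuous, piecewise continuously differentiable curve on `[0,1]`: a continuous
curve together with a derivative function which is the honest derivative away from a
finite exceptional set, and which is interval integrable. -/
structure PC1Curve (M : Type*) [NormedAddCommGroup M] [NormedSpace ℝ M] where
  toFun : ℝ → M
  deriv : ℝ → M
  continuousOn : ContinuousOn toFun (Set.Icc 0 1)
  exc : Set ℝ
  exc_finite : exc.Finite
  hasDeriv : ∀ t ∈ Set.Ioo (0 : ℝ) 1 \ exc, HasDerivAt toFun (deriv t) t
  deriv_integrable : IntervalIntegrable deriv MeasureTheory.volume 0 1

/-- The Riemannian length `ℓ_σ(γ) = ∫₀¹ ‖γ'(t) − (1/2)[γ(t), γ'(t)]‖_{σ₀} dt` of a piecewise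
`C¹` curve, for the left invariant Riemannian metric determined by the inner product `σ`. -/
noncomputable def riemLength {M : Type*} [NormedAddCommGroup M] [InnerProductSpace ℝ M]
    [CompleteSpace M] (H : HTypeGroup M) (σ : M → M → ℝ) (γ : PC1Curve M) : ℝ :=
  ∫ t in (0 : ℝ)..1,
    Real.sqrt (σ (γ.deriv t - (2⁻¹ : ℝ) • H.bracket (γ.toFun t) (γ.deriv t))
      (γ.deriv t - (2⁻¹ : ℝ) • H.bracket (γ.toFun t) (γ.deriv t)))

/-- The geodesic distance `d_σ(p, q)`: the infimum of the Riemannian lengths of continuous,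
piecewise continuously differentiable curves joining `p` to `q`. -/
noncomputable def riemDist {M : Type*} [NormedAddCommGroup M] [InnerProductSpace ℝ M]
    [CompleteSpace M] (H : HTypeGroup M) (σ : M → M → ℝ) (p q : M) : ℝ :=
  sInf {L : ℝ | ∃ γ : PC1Curve M, γ.toFun 0 = p ∧ γ.toFun 1 = q ∧ L = riemLength H σ γ}

/-!
Pairing the left-trivialized velocity `γ' - ½[γ, γ']` of a curve with the functional
`σ₀(x - y, π₁ ·)` and integrating shows `‖x - y‖_{σ₀} ≤ C ℓ_σ(γ)` for every curve from `x + z₁`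
to `y + z₂`, since the bracket term lies in `W`; so points with different `V`-components are at
positive distance.

Conversely, `σ₀` is equivalent to the norm on the finite-dimensional `W`, so strict weakness
forces unit vectors `e ∈ V` with `‖e‖_{σ₀}` arbitrarily small. The horizontal lift of an ellipse
with axes `L e` and `(π L)⁻¹ J_z e` climbs vertically by `π [L e, (π L)⁻¹ J_z e] = z`, and has
length at most `2π (L ‖e‖_{σ₀} + (π L)⁻¹ ‖J_z e‖_{σ₀})`, which is small once `L` is large and
then `e` is cheap enough.
-/

open MeasureTheory Set Real

section ContinuousForm

variable {E : Type*} [NormedAddCommGroup E] [NormedSpace ℝ E]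

lemma LinearMap.BilinForm.abs_apply_le_sqrt_mul_sqrt (B : LinearMap.BilinForm ℝ E)
    (hs : ∀ v, 0 ≤ B v v) (hB : LinearMap.IsSymm B) (u v : E) :
    |B u v| ≤ √(B u u) * √(B v v) := by
  rw [← Real.sqrt_mul (hs u), ← Real.sqrt_sq_eq_abs]
  exact Real.sqrt_le_sqrt (B.apply_sq_le_of_symm hs hB u v)

lemma exists_continuousBilinear_eq_of_sqrt_le (σ : E → E → ℝ)
    (h_bilin : ∀ v : E, IsLinearMap ℝ (σ v) ∧ IsLinearMap ℝ (fun w => σ w v))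
    (h_symm : ∀ v w : E, σ v w = σ w v) (h_nonneg : ∀ v, 0 ≤ σ v v)
    {c₀ : ℝ} (h_cont : ∀ v : E, √(σ v v) ≤ c₀ * ‖v‖) :
    ∃ B : E →L[ℝ] E →L[ℝ] ℝ, ∀ u v, B u v = σ u v := by
  let B₀ : LinearMap.BilinForm ℝ E :=
    LinearMap.mk₂ ℝ σ (fun a b c => (h_bilin c).2.map_add a b)
      (fun t a c => (h_bilin c).2.map_smul t a)
      (fun c a b => (h_bilin c).1.map_add a b)
      (fun t c a => (h_bilin c).1.map_smul t a)
  refine ⟨LinearMap.mkContinuous₂ B₀ (c₀ ^ 2) fun u v => ?_, fun _ _ => rfl⟩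
  calc ‖σ u v‖ ≤ √(σ u u) * √(σ v v) :=
        B₀.abs_apply_le_sqrt_mul_sqrt h_nonneg ⟨h_symm⟩ u v
    _ ≤ (c₀ * ‖u‖) * (c₀ * ‖v‖) :=
        mul_le_mul (h_cont u) (h_cont v) (sqrt_nonneg _) ((sqrt_nonneg _).trans (h_cont u))
    _ = c₀ ^ 2 * ‖u‖ * ‖v‖ := by ring

variable (B : E →L[ℝ] E →L[ℝ] ℝ)

lemma sqrt_apply_smul_self (a : ℝ) (u : E) : √(B (a • u) (a • u)) = |a| * √(B u u) := by
  simp only [map_smul, FunLike.coe_smul, Pi.smul_apply, smul_eq_mul, ← mul_assoc,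
    ← sq, Real.sqrt_mul (sq_nonneg a), Real.sqrt_sq_eq_abs]

lemma intervalIntegrable_sqrt_apply_self {f : ℝ → E} {a b : ℝ}
    (hf : IntervalIntegrable f volume a b) :
    IntervalIntegrable (fun t => √(B (f t) (f t))) volume a b := by
  refine (hf.norm.const_mul √‖B‖).mono_fun' ?_ (Filter.Eventually.of_forall fun t => ?_)
  · exact (continuous_sqrt.comp (B.continuous₂.comp (continuous_id.prodMk continuous_id)))
      |>.comp_aestronglyMeasurable hf.def'.aestronglyMeasurable
  · dsimp only
    rw [Real.norm_of_nonneg (sqrt_nonneg _), ← Real.sqrt_mul_self (norm_nonneg (f t)),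
      ← Real.sqrt_mul (norm_nonneg B), ← mul_assoc]
    exact Real.sqrt_le_sqrt ((le_abs_self _).trans (B.le_opNorm₂ _ _))

variable {B}

lemma abs_apply_le_sqrt_mul_sqrt (hB_symm : ∀ u v, B u v = B v u) (hB_nonneg : ∀ v, 0 ≤ B v v)
    (u v : E) : |B u v| ≤ √(B u u) * √(B v v) :=
  LinearMap.BilinForm.abs_apply_le_sqrt_mul_sqrt B.toLinearMap₁₂ hB_nonneg ⟨hB_symm⟩ u v

lemma sqrt_apply_add_self_le (hB_symm : ∀ u v, B u v = B v u) (hB_nonneg : ∀ v, 0 ≤ B v v)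
    (u v : E) : √(B (u + v) (u + v)) ≤ √(B u u) + √(B v v) := by
  have h_cs := (le_abs_self _).trans (abs_apply_le_sqrt_mul_sqrt hB_symm hB_nonneg u v)
  rw [Real.sqrt_le_left (by positivity), add_sq, Real.sq_sqrt (hB_nonneg u),
    Real.sq_sqrt (hB_nonneg v)]
  simp only [map_add, add_apply, hB_symm v u]
  linarith

lemma sqrt_apply_smul_add_smul_self_le (hB_symm : ∀ u v, B u v = B v u)
    (hB_nonneg : ∀ v, 0 ≤ B v v) (a b : ℝ) (u v : E) :
    √(B (a • u + b • v) (a • u + b • v)) ≤ |a| * √(B u u) + |b| * √(B v v) := by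
  simpa only [sqrt_apply_smul_self] using sqrt_apply_add_self_le hB_symm hB_nonneg (a • u) (b • v)

end ContinuousForm

lemma Submodule.exists_pos_mul_norm_le {E : Type*} [NormedAddCommGroup E] [NormedSpace ℝ E]
    (K : Submodule ℝ E) [FiniteDimensional ℝ K] {f : E → ℝ} (hf : Continuous f)
    (h_pos : ∀ w ∈ K, w ≠ 0 → 0 < f w) (h_smul : ∀ (a : ℝ) w, f (a • w) = |a| * f w) :
    ∃ c > 0, ∀ w ∈ K, c * ‖w‖ ≤ f w := by
  rcases subsingleton_or_nontrivial K with hK | hK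
  · refine ⟨1, one_pos, fun w hw => ?_⟩
    obtain rfl : w = 0 := congrArg Subtype.val (Subsingleton.elim (⟨w, hw⟩ : K) 0)
    simpa using (h_smul 0 0).ge
  obtain ⟨u, hu, h_min⟩ := (isCompact_sphere (0 : K) 1).exists_isMinOn
    (NormedSpace.sphere_nonempty.mpr zero_le_one) (hf.comp continuous_subtype_val).continuousOn
  have hu0 : (u : E) ≠ 0 := by
    rintro h
    simp [h] at hu
  refine ⟨f u, h_pos u u.2 hu0, fun w hw => ?_⟩
  rcases eq_or_ne w 0 with rfl | hw0
  · simpa using (h_smul 0 0).ge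
  have h_unit : (⟨‖w‖⁻¹ • w, K.smul_mem _ hw⟩ : K) ∈ Metric.sphere (0 : K) 1 := by
    simp [norm_smul, hw0]
  have : f u ≤ ‖w‖⁻¹ * f w := by simpa [h_smul] using h_min h_unit
  rwa [le_inv_mul_iff₀ (norm_pos_iff.mpr hw0), mul_comm] at this

namespace PC1Curve

variable {E : Type*} [NormedAddCommGroup E] [NormedSpace ℝ E]

def ofHasDerivAt (f f' : ℝ → E) (hf : ∀ t, HasDerivAt f (f' t) t) (hf' : Continuous f') :
    PC1Curve E where
  toFun := f
  deriv := f'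
  continuousOn := (continuous_iff_continuousAt.mpr fun t => (hf t).continuousAt).continuousOn
  exc := ∅
  exc_finite := finite_empty
  hasDeriv t _ := hf t
  deriv_integrable := hf'.intervalIntegrable 0 1

def segment (p q : E) : PC1Curve E :=
  ofHasDerivAt (fun t => p + t • (q - p)) (fun _ => q - p)
    (fun t => by simpa using ((hasDerivAt_id t).smul_const (q - p)).const_add p) continuous_const

lemma integral_deriv [CompleteSpace E] (γ : PC1Curve E) :
    ∫ t in (0 : ℝ)..1, γ.deriv t = γ.toFun 1 - γ.toFun 0 :=
  integral_eq_of_hasDerivAt_off_countable_of_le _ _ zero_le_one γ.exc_finite.countable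
    γ.continuousOn γ.hasDeriv γ.deriv_integrable

end PC1Curve

noncomputable def ellipse {E : Type*} [NormedAddCommGroup E] [NormedSpace ℝ E] (a b : E)
    (t : ℝ) : E :=
  sin (2 * π * t) • a + (1 - cos (2 * π * t)) • b

lemma hasDerivAt_ellipse {E : Type*} [NormedAddCommGroup E] [NormedSpace ℝ E] (a b : E) (t : ℝ) :
    HasDerivAt (ellipse a b)
      ((2 * π * cos (2 * π * t)) • a + (2 * π * sin (2 * π * t)) • b) t := by
  have hθ : HasDerivAt (fun s : ℝ => 2 * π * s) (2 * π) t := by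
    simpa using (hasDerivAt_id t).const_mul (2 * π)
  exact ((hθ.sin.smul_const a).add ((hθ.cos.const_sub 1).smul_const b)).congr_deriv (by module)

section Distance

variable {M : Type*} [NormedAddCommGroup M] [InnerProductSpace ℝ M] [CompleteSpace M]
  (H : HTypeGroup M) (σ : M → M → ℝ)

lemma riemLength_nonneg (γ : PC1Curve M) : 0 ≤ riemLength H σ γ :=
  intervalIntegral.integral_nonneg zero_le_one fun _ _ => sqrt_nonneg _

lemma riemDist_le_riemLength (γ : PC1Curve M) :
    riemDist H σ (γ.toFun 0) (γ.toFun 1) ≤ riemLength H σ γ :=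
  csInf_le ⟨0, by rintro _ ⟨γ', -, -, rfl⟩; exact riemLength_nonneg H σ γ'⟩ ⟨γ, rfl, rfl, rfl⟩

lemma le_riemDist {a : ℝ} {p q : M}
    (h : ∀ γ : PC1Curve M, γ.toFun 0 = p → γ.toFun 1 = q → a ≤ riemLength H σ γ) :
    a ≤ riemDist H σ p q := by
  refine le_csInf ⟨_, PC1Curve.segment p q, ?_, ?_, rfl⟩ ?_
  · simp [PC1Curve.segment, PC1Curve.ofHasDerivAt]
  · simp [PC1Curve.segment, PC1Curve.ofHasDerivAt]
  · rintro _ ⟨γ, h0, h1, rfl⟩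
    exact h γ h0 h1

lemma riemDist_nonneg (p q : M) : 0 ≤ riemDist H σ p q :=
  le_riemDist H σ fun γ _ _ => riemLength_nonneg H σ γ

end Distance

namespace HTypeGroup

variable {M : Type*} [NormedAddCommGroup M] [InnerProductSpace ℝ M] [CompleteSpace M]
  (H : HTypeGroup M)

lemma eq_zero_of_mem_V_of_mem_W {a : M} (haV : a ∈ H.V) (haW : a ∈ H.W) : a = 0 :=
  inner_self_eq_zero.mp (H.orthogonal a haV a haW)

lemma proj1_add_of_mem {x z : M} (hx : x ∈ H.V) (hz : z ∈ H.W) : H.proj1 (x + z) = x := by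
  have h_swap : H.proj1 (x + z) - x = z - H.proj2 (x + z) :=
    sub_eq_sub_iff_add_eq_add.mpr ((H.proj_add (x + z)).trans (add_comm x z))
  refine sub_eq_zero.mp (H.eq_zero_of_mem_V_of_mem_W (H.V.sub_mem (H.proj1_mem _) hx) ?_)
  exact h_swap ▸ H.W.sub_mem hz (H.proj2_mem _)

lemma proj1_eq_zero_of_mem_W {z : M} (hz : z ∈ H.W) : H.proj1 z = 0 := by
  simpa using H.proj1_add_of_mem H.V.zero_mem hz

lemma bracket_eq_zero_of_mem_W_left {w : M} (hw : w ∈ H.W) (u : M) : H.bracket w u = 0 := by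
  rw [H.bracket_skew, H.bracket_W u w hw, neg_zero]

lemma bracket_self (u : M) : H.bracket u u = 0 := by
  have h := H.bracket_skew u u
  rwa [eq_neg_iff_add_eq_zero, ← two_smul ℝ, smul_eq_zero, or_iff_right two_ne_zero] at h

lemma bracket_add_mem_W {u w : M} (hu : u ∈ H.W) (hw : w ∈ H.W) (a b : M) :
    H.bracket (a + u) (b + w) = H.bracket a b := by
  simp [H.bracket_W _ w hw, H.bracket_eq_zero_of_mem_W_left hu]

lemma inner_Jmap_left {z : M} (hz : z ∈ H.W) {a b : M} (ha : a ∈ H.V) (hb : b ∈ H.V) :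
    ⟪H.Jmap z a, b⟫ = -⟪a, H.Jmap z b⟫ := by
  rw [H.Jmap_inner z hz a ha b hb, real_inner_comm (H.Jmap z b), H.Jmap_inner z hz b hb a ha,
    H.bracket_skew b a, inner_neg_right, neg_neg]

lemma inner_Jmap_self {z : M} (hz : z ∈ H.W) {e : M} (he : e ∈ H.V) :
    ⟪H.Jmap z e, H.Jmap z e⟫ = ‖z‖ ^ 2 * ‖e‖ ^ 2 := by
  rw [H.inner_Jmap_left hz he (H.Jmap_mem_V z hz e he), H.Jmap_sq z hz e he, neg_smul,
    inner_neg_right, neg_neg, real_inner_smul_right, real_inner_self_eq_norm_sq]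

lemma norm_Jmap {z : M} (hz : z ∈ H.W) {e : M} (he : e ∈ H.V) :
    ‖H.Jmap z e‖ = ‖z‖ * ‖e‖ := by
  rw [← sq_eq_sq₀ (norm_nonneg _) (by positivity), mul_pow, ← real_inner_self_eq_norm_sq,
    H.inner_Jmap_self hz he]

/-- Polarization of `‖J_z e‖² = ‖z‖² ‖e‖²` in `z`. -/
lemma inner_Jmap_Jmap {z z' : M} (hz : z ∈ H.W) (hz' : z' ∈ H.W) {e : M} (he : e ∈ H.V) :
    ⟪H.Jmap z' e, H.Jmap z e⟫ = ⟪z', z⟫ * ‖e‖ ^ 2 := by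
  have h_sum := H.inner_Jmap_self (H.W.add_mem hz' hz) he
  simp only [map_add, add_apply, inner_add_left (𝕜 := ℝ), inner_add_right (𝕜 := ℝ),
    H.inner_Jmap_self hz he, H.inner_Jmap_self hz' he, norm_add_sq_real,
    real_inner_comm (H.Jmap z' e) (H.Jmap z e)] at h_sum
  linarith

lemma bracket_Jmap_self {z : M} (hz : z ∈ H.W) {e : M} (he : e ∈ H.V) :
    H.bracket e (H.Jmap z e) = (‖e‖ ^ 2) • z := by
  set d := H.bracket e (H.Jmap z e) - (‖e‖ ^ 2) • z
  have hd : d ∈ H.W := H.W.sub_mem (H.bracket_mem_W _ _) (H.W.smul_mem _ hz)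
  have h_perp : ∀ z' ∈ H.W, ⟪z', d⟫ = 0 := fun z' hz' => by
    rw [inner_sub_right, real_inner_smul_right,
      ← H.Jmap_inner z' hz' e he _ (H.Jmap_mem_V z hz e he), H.inner_Jmap_Jmap hz hz' he]
    ring
  exact sub_eq_zero.mp (inner_self_eq_zero.mp (h_perp d hd))

noncomputable def leftDeriv (γ : PC1Curve M) (t : ℝ) : M :=
  γ.deriv t - (2⁻¹ : ℝ) • H.bracket (γ.toFun t) (γ.deriv t)

lemma riemLength_eq_integral_leftDeriv (σ : M → M → ℝ) (γ : PC1Curve M) :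
    riemLength H σ γ = ∫ t in (0 : ℝ)..1, √(σ (H.leftDeriv γ t) (H.leftDeriv γ t)) :=
  rfl

lemma proj1_leftDeriv (γ : PC1Curve M) (t : ℝ) :
    H.proj1 (H.leftDeriv γ t) = H.proj1 (γ.deriv t) := by
  rw [leftDeriv, map_sub, map_smul, H.proj1_eq_zero_of_mem_W (H.bracket_mem_W _ _), smul_zero,
    sub_zero]

lemma intervalIntegrable_leftDeriv (γ : PC1Curve M) :
    IntervalIntegrable (H.leftDeriv γ) volume 0 1 := by
  obtain ⟨K, hK⟩ := isCompact_Icc.exists_bound_of_continuousOn γ.continuousOn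
  have h_deriv := γ.deriv_integrable
  rw [intervalIntegrable_iff_integrableOn_Ioc_of_le zero_le_one] at h_deriv ⊢
  refine h_deriv.sub (Integrable.smul _ (H.bracket.integrable_of_bilin_of_bdd_left K ?_ ?_ h_deriv))
  · exact (γ.continuousOn.mono Ioc_subset_Icc_self).aestronglyMeasurable measurableSet_Ioc
  · exact (ae_restrict_mem measurableSet_Ioc).mono fun t ht => hK t (Ioc_subset_Icc_self ht)

lemma proj1_integral_leftDeriv (γ : PC1Curve M) :
    H.proj1 (∫ t in (0 : ℝ)..1, H.leftDeriv γ t) = H.proj1 (γ.toFun 1 - γ.toFun 0) := by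
  rw [← H.proj1.intervalIntegral_comp_comm (H.intervalIntegrable_leftDeriv γ)]
  simp only [proj1_leftDeriv]
  rw [H.proj1.intervalIntegral_comp_comm γ.deriv_integrable, γ.integral_deriv]

theorem sqrt_sub_le_mul_riemLength (B : M →L[ℝ] M →L[ℝ] ℝ) (hB_symm : ∀ u v, B u v = B v u)
    (hB_nonneg : ∀ v, 0 ≤ B v v) {C : ℝ} (hC : 0 ≤ C)
    (h_proj1 : ∀ v, √(B (H.proj1 v) (H.proj1 v)) ≤ C * √(B v v))
    {x y z₁ z₂ : M} (hx : x ∈ H.V) (hy : y ∈ H.V) (hz₁ : z₁ ∈ H.W) (hz₂ : z₂ ∈ H.W)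
    (γ : PC1Curve M) (h0 : γ.toFun 0 = x + z₁) (h1 : γ.toFun 1 = y + z₂) :
    √(B (x - y) (x - y)) ≤ C * riemLength H (fun u v => B u v) γ := by
  set s := √(B (x - y) (x - y))
  set φ : M →L[ℝ] ℝ := (B (x - y)).comp H.proj1
  have h_int : IntervalIntegrable (fun t => φ (H.leftDeriv γ t)) volume 0 1 :=
    ⟨φ.integrable_comp (H.intervalIntegrable_leftDeriv γ).1,
      φ.integrable_comp (H.intervalIntegrable_leftDeriv γ).2⟩
  have h_integral : ∫ t in (0 : ℝ)..1, φ (H.leftDeriv γ t) = -s ^ 2 := by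
    rw [φ.intervalIntegral_comp_comm (H.intervalIntegrable_leftDeriv γ),
      ContinuousLinearMap.comp_apply, proj1_integral_leftDeriv, h0, h1, map_sub H.proj1,
      H.proj1_add_of_mem hx hz₁, H.proj1_add_of_mem hy hz₂, ← neg_sub x y, map_neg,
      Real.sq_sqrt (hB_nonneg _)]
  have h_pointwise (t : ℝ) :
      |φ (H.leftDeriv γ t)| ≤ s * C * √(B (H.leftDeriv γ t) (H.leftDeriv γ t)) :=
    calc |φ (H.leftDeriv γ t)|
        ≤ s * √(B (H.proj1 (H.leftDeriv γ t)) (H.proj1 (H.leftDeriv γ t))) :=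
          abs_apply_le_sqrt_mul_sqrt hB_symm hB_nonneg _ _
      _ ≤ s * (C * √(B (H.leftDeriv γ t) (H.leftDeriv γ t))) :=
          mul_le_mul_of_nonneg_left (h_proj1 _) (sqrt_nonneg _)
      _ = s * C * √(B (H.leftDeriv γ t) (H.leftDeriv γ t)) := by ring
  have h_bound : s ^ 2 ≤ s * (C * riemLength H (fun u v => B u v) γ) :=
    calc s ^ 2 = |∫ t in (0 : ℝ)..1, φ (H.leftDeriv γ t)| := by
          rw [h_integral, abs_neg, abs_of_nonneg (sq_nonneg s)]
      _ ≤ ∫ t in (0 : ℝ)..1, |φ (H.leftDeriv γ t)| :=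
          intervalIntegral.abs_integral_le_integral_abs zero_le_one
      _ ≤ ∫ t in (0 : ℝ)..1, s * C * √(B (H.leftDeriv γ t) (H.leftDeriv γ t)) :=
          intervalIntegral.integral_mono_on zero_le_one h_int.abs
            ((intervalIntegrable_sqrt_apply_self B (H.intervalIntegrable_leftDeriv γ)).const_mul _)
            fun t _ => h_pointwise t
      _ = s * (C * riemLength H (fun u v => B u v) γ) := by
          rw [intervalIntegral.integral_const_mul, riemLength_eq_integral_leftDeriv, mul_assoc]
  by_contra! h_lt
  have hs : 0 < s := (mul_nonneg hC (riemLength_nonneg H _ γ)).trans_lt h_lt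
  nlinarith [mul_lt_mul_of_pos_left h_lt hs]

theorem exists_unit_mem_V_sqrt_lt (B : M →L[ℝ] M →L[ℝ] ℝ) (hB_pos : ∀ v, v ≠ 0 → 0 < B v v)
    {C : ℝ} (hC : 0 < C)
    (h_proj : ∀ v : M, √(B (H.proj1 v) (H.proj1 v)) ≤ C * √(B v v) ∧
        √(B (H.proj2 v) (H.proj2 v)) ≤ C * √(B v v))
    (h_weak : ¬ ∃ c > (0 : ℝ), ∀ v : M, c * ‖v‖ ≤ √(B v v)) {δ : ℝ} (hδ : 0 < δ) :
    ∃ e ∈ H.V, ‖e‖ = 1 ∧ √(B e e) < δ := by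
  have := H.W_findim
  obtain ⟨cW, hcW, h_W⟩ := H.W.exists_pos_mul_norm_le (f := fun v => √(B v v))
    (by fun_prop) (fun w _ hw => Real.sqrt_pos.mpr (hB_pos w hw)) (sqrt_apply_smul_self B)
  obtain ⟨e, heV, he⟩ : ∃ e ∈ H.V, √(B e e) < δ * ‖e‖ := by
    by_contra! h_V
    refine h_weak ⟨min δ cW / (2 * C), by positivity, fun v => ?_⟩
    have h₁ : min δ cW * ‖H.proj1 v‖ ≤ C * √(B v v) :=
      (mul_le_mul_of_nonneg_right (min_le_left _ _) (norm_nonneg _)).trans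
        ((h_V _ (H.proj1_mem v)).trans (h_proj v).1)
    have h₂ : min δ cW * ‖H.proj2 v‖ ≤ C * √(B v v) :=
      (mul_le_mul_of_nonneg_right (min_le_right _ _) (norm_nonneg _)).trans
        ((h_W _ (H.proj2_mem v)).trans (h_proj v).2)
    have h_split : ‖v‖ ≤ ‖H.proj1 v‖ + ‖H.proj2 v‖ := by
      simpa only [H.proj_add] using norm_add_le (H.proj1 v) (H.proj2 v)
    rw [div_mul_eq_mul_div, div_le_iff₀ (by positivity)]
    nlinarith [mul_le_mul_of_nonneg_left h_split (le_min hδ.le hcW.le)]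
  have he0 : e ≠ 0 := by
    rintro rfl
    simp at he
  refine ⟨‖e‖⁻¹ • e, H.V.smul_mem _ heV, by simp [norm_smul, he0], ?_⟩
  rwa [sqrt_apply_smul_self, abs_inv, abs_norm, inv_mul_lt_iff₀ (norm_pos_iff.mpr he0), mul_comm]

lemma bracket_ellipse (a b : M) (t : ℝ) :
    H.bracket (ellipse a b t) ((2 * π * cos (2 * π * t)) • a + (2 * π * sin (2 * π * t)) • b) =
      (2 * π * (1 - cos (2 * π * t))) • H.bracket a b := by
  simp only [ellipse, map_add, map_smul, add_apply, smul_apply, H.bracket_self,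
    H.bracket_skew b a, smul_zero, smul_neg]
  match_scalars
  linear_combination 2 * π * sin_sq_add_cos_sq (2 * π * t)

/-- The left translate by `p` of the horizontal lift of `c = ellipse a b`: the last term is a
primitive of `½ [c, c']`, which makes the left derivative equal to `c'`. -/
noncomputable def loop (p a b : M) : PC1Curve M :=
  PC1Curve.ofHasDerivAt
    (fun t => p + ellipse a b t + (2⁻¹ : ℝ) • H.bracket p (ellipse a b t) +
      (2⁻¹ * (2 * π * t - sin (2 * π * t))) • H.bracket a b)
    (fun t => (2 * π * cos (2 * π * t)) • a + (2 * π * sin (2 * π * t)) • b +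
      (2⁻¹ : ℝ) • H.bracket p ((2 * π * cos (2 * π * t)) • a + (2 * π * sin (2 * π * t)) • b) +
      (π * (1 - cos (2 * π * t))) • H.bracket a b)
    (fun t => by
      have h2π : HasDerivAt (fun s : ℝ => 2 * π * s) (2 * π) t := by
        simpa using (hasDerivAt_id t).const_mul (2 * π)
      have hθ : HasDerivAt (fun s => 2 * π * s - sin (2 * π * s))
          (2 * π - 2 * π * cos (2 * π * t)) t :=
        (h2π.sub h2π.sin).congr_deriv (by ring)
      exact ((((hasDerivAt_ellipse a b t).const_add p).add
        (((H.bracket p).hasFDerivAt.comp_hasDerivAt t (hasDerivAt_ellipse a b t)).const_smul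
          (2⁻¹ : ℝ))).add ((hθ.const_mul 2⁻¹).smul_const (H.bracket a b))).congr_deriv
        (by module))
    (by fun_prop)

lemma loop_zero (p a b : M) : (H.loop p a b).toFun 0 = p := by
  simp [loop, PC1Curve.ofHasDerivAt, ellipse]

lemma loop_one (p a b : M) : (H.loop p a b).toFun 1 = p + π • H.bracket a b := by
  simp [loop, PC1Curve.ofHasDerivAt, ellipse]

lemma leftDeriv_loop (p a b : M) (t : ℝ) :
    H.leftDeriv (H.loop p a b) t =
      (2 * π * cos (2 * π * t)) • a + (2 * π * sin (2 * π * t)) • b := by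
  have h_vert (u : M) (s : ℝ) : (2⁻¹ : ℝ) • H.bracket p u + s • H.bracket a b ∈ H.W :=
    H.W.add_mem (H.W.smul_mem _ (H.bracket_mem_W _ _)) (H.W.smul_mem _ (H.bracket_mem_W _ _))
  simp only [leftDeriv, loop, PC1Curve.ofHasDerivAt]
  rw [add_assoc (p + _), add_assoc (_ • a + _ • b), H.bracket_add_mem_W (h_vert _ _) (h_vert _ _),
    map_add H.bracket, add_apply, bracket_ellipse]
  module

theorem riemLength_loop_le (B : M →L[ℝ] M →L[ℝ] ℝ) (hB_symm : ∀ u v, B u v = B v u)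
    (hB_nonneg : ∀ v, 0 ≤ B v v) (p a b : M) :
    riemLength H (fun u v => B u v) (H.loop p a b) ≤ 2 * π * (√(B a a) + √(B b b)) := by
  calc riemLength H (fun u v => B u v) (H.loop p a b)
      = ∫ t in (0 : ℝ)..1, √(B (H.leftDeriv (H.loop p a b) t) (H.leftDeriv (H.loop p a b) t)) :=
        rfl
    _ ≤ ∫ _ in (0 : ℝ)..1, 2 * π * (√(B a a) + √(B b b)) :=
        intervalIntegral.integral_mono_on zero_le_one
          (intervalIntegrable_sqrt_apply_self B (H.intervalIntegrable_leftDeriv _))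
          intervalIntegrable_const fun t _ => ?_
    _ = 2 * π * (√(B a a) + √(B b b)) := by simp
  rw [leftDeriv_loop]
  refine (sqrt_apply_smul_add_smul_self_le hB_symm hB_nonneg _ _ a b).trans ?_
  rw [abs_mul (2 * π), abs_mul (2 * π), abs_of_pos two_pi_pos]
  have h_cos := mul_le_mul_of_nonneg_right (abs_cos_le_one (2 * π * t)) (sqrt_nonneg (B a a))
  have h_sin := mul_le_mul_of_nonneg_right (abs_sin_le_one (2 * π * t)) (sqrt_nonneg (B b b))
  nlinarith [two_pi_pos]

theorem exists_riemLength_lt_of_mem_W (B : M →L[ℝ] M →L[ℝ] ℝ) (hB_symm : ∀ u v, B u v = B v u)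
    (hB_pos : ∀ v, v ≠ 0 → 0 < B v v) {c₀ : ℝ} (hc₀ : 0 < c₀)
    (h_cont : ∀ v : M, √(B v v) ≤ c₀ * ‖v‖) {C : ℝ} (hC : 0 < C)
    (h_proj : ∀ v : M, √(B (H.proj1 v) (H.proj1 v)) ≤ C * √(B v v) ∧
        √(B (H.proj2 v) (H.proj2 v)) ≤ C * √(B v v))
    (h_weak : ¬ ∃ c > (0 : ℝ), ∀ v : M, c * ‖v‖ ≤ √(B v v)) (p : M) {z : M} (hz : z ∈ H.W)
    {ε : ℝ} (hε : 0 < ε) :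
    ∃ γ : PC1Curve M, γ.toFun 0 = p ∧ γ.toFun 1 = p + z ∧
      riemLength H (fun u v => B u v) γ < ε := by
  have hB_nonneg (v : M) : 0 ≤ B v v :=
    (eq_or_ne v 0).elim (fun h => by simp [h]) fun h => (hB_pos v h).le
  set L := 4 * c₀ * ‖z‖ / ε + 1
  have hL : 0 < L := by positivity
  obtain ⟨e, heV, he_norm, he⟩ :=
    H.exists_unit_mem_V_sqrt_lt B hB_pos hC h_proj h_weak (δ := ε / (8 * π * L)) (by positivity)
  refine ⟨H.loop p (L • e) ((π * L)⁻¹ • H.Jmap z e), H.loop_zero _ _ _, ?_, ?_⟩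
  · rw [loop_one, map_smul, map_smul, smul_apply, H.bracket_Jmap_self hz heV, he_norm, smul_smul,
      smul_smul, smul_smul]
    field_simp
    simp
  have h_Je : √(B (H.Jmap z e) (H.Jmap z e)) ≤ c₀ * ‖z‖ :=
    (h_cont _).trans_eq (by rw [H.norm_Jmap hz heV, he_norm, mul_one])
  have h_major : 2 * π * (L * √(B e e)) < ε / 4 :=
    calc 2 * π * (L * √(B e e)) < 2 * π * (L * (ε / (8 * π * L))) := by gcongr
      _ = ε / 4 := by field_simp; ring
  have h_minor : 2 * π * ((π * L)⁻¹ * √(B (H.Jmap z e) (H.Jmap z e))) ≤ ε / 2 :=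
    calc _ ≤ 2 * π * ((π * L)⁻¹ * (c₀ * ‖z‖)) := by gcongr
      _ = ε / 2 * ((4 * c₀ * ‖z‖ / ε) / L) := by field_simp; ring
      _ ≤ ε / 2 := mul_le_of_le_one_right (by positivity)
        ((div_le_one hL).mpr (le_add_of_nonneg_right zero_le_one))
  refine (H.riemLength_loop_le B hB_symm hB_nonneg _ _ _).trans_lt ?_
  rw [sqrt_apply_smul_self, sqrt_apply_smul_self, abs_of_pos hL, abs_of_pos (by positivity),
    mul_add]
  linarith

end HTypeGroup

/-- For a strictly weak, left invariant Riemannian metric `σ₀` on a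
Hilbertian H-type group `M = V ⊕ W`, for all `x, y ∈ V` and `z₁, z₂ ∈ W` one has
`d_σ(x + z₁, y + z₂) = 0` if and only if `x = y`. -/
theorem statement_11 {M : Type*} [NormedAddCommGroup M] [InnerProductSpace ℝ M]
    [CompleteSpace M] (H : HTypeGroup M) (σ : M → M → ℝ)
    (h_bilin : ∀ v : M, IsLinearMap ℝ (σ v) ∧ IsLinearMap ℝ (fun w => σ w v))
    (h_symm : ∀ v w : M, σ v w = σ w v)
    (h_posdef : ∀ v : M, v ≠ 0 → 0 < σ v v)
    (c₀ : ℝ) (hc₀ : 0 < c₀)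
    (h_cont : ∀ v : M, Real.sqrt (σ v v) ≤ c₀ * ‖v‖)
    (C : ℝ) (hC : 0 < C)
    (h_proj : ∀ v : M, Real.sqrt (σ (H.proj1 v) (H.proj1 v)) ≤ C * Real.sqrt (σ v v) ∧
        Real.sqrt (σ (H.proj2 v) (H.proj2 v)) ≤ C * Real.sqrt (σ v v))
    (h_strictly_weak : ¬ ∃ c > (0 : ℝ), ∀ v : M, c * ‖v‖ ≤ Real.sqrt (σ v v)) :
    ∀ x ∈ H.V, ∀ y ∈ H.V, ∀ z₁ ∈ H.W, ∀ z₂ ∈ H.W,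
      (riemDist H σ (x + z₁) (y + z₂) = 0 ↔ x = y) := by
  intro x hx y hy z₁ hz₁ z₂ hz₂
  have h_nonneg (v : M) : 0 ≤ σ v v :=
    (eq_or_ne v 0).elim (fun h => by simp [h, (h_bilin 0).1.map_zero]) fun h => (h_posdef v h).le
  obtain ⟨B, hB⟩ := exists_continuousBilinear_eq_of_sqrt_le σ h_bilin h_symm h_nonneg h_cont
  obtain rfl : σ = fun u v => B u v := funext₂ fun u v => (hB u v).symm
  constructor
  · intro h_dist
    by_contra h_ne
    have h_lower : √(B (x - y) (x - y)) / C ≤ riemDist H (fun u v => B u v) (x + z₁) (y + z₂) :=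
      le_riemDist H _ fun γ h0 h1 => (div_le_iff₀' hC).mpr
        (H.sqrt_sub_le_mul_riemLength B h_symm h_nonneg hC.le (fun v => (h_proj v).1)
          hx hy hz₁ hz₂ γ h0 h1)
    rw [h_dist, div_le_iff₀ hC, zero_mul] at h_lower
    exact (h_posdef _ (sub_ne_zero.mpr h_ne)).not_ge
      (Real.sqrt_eq_zero'.mp (h_lower.antisymm (sqrt_nonneg _)))
  · rintro rfl
    refine le_antisymm (le_of_forall_pos_le_add fun ε hε => ?_) (riemDist_nonneg H _ _ _)
    obtain ⟨γ, h0, h1, hγ⟩ := H.exists_riemLength_lt_of_mem_W B h_symm h_posdef hc₀ h_cont hC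
      h_proj h_strictly_weak (x + z₁) (H.W.sub_mem hz₂ hz₁) hε
    rw [add_add_sub_cancel] at h1
    calc riemDist H _ (x + z₁) (x + z₂) ≤ riemLength H _ γ :=
          h0 ▸ h1 ▸ riemDist_le_riemLength H _ γ
      _ ≤ 0 + ε := by linarith
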